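/- Let G be a connected graph on n vertices, x a vertex of G with exactly three neighbors, y and z two distinct neighbors of x, and c ≥ 0 an integer; let G' be the associated terminal-augmented graph with terminals s and t. Then G has a Hamiltonian cycle if and only if G' contains an st-path P with |V(P)| ≥ n + 2. -/

import Mathlib

open SimpleGraph

/-- The open neighborhood of a vertex set `S`: vertices outside `S` adjacent to some
vertex of `S`. -/
def openNbhd {V : Type*} (G : SimpleGraph V) (S : Set V) : Set V :=
  {v | v ∉ S ∧ ∃ w ∈ S, G.Adj v w}

/-- The terminal-augmented graph `G'` of `(G, x, y, z, c)`: a new vertex `s`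
(modelled as `Sum.inr (Sum.inl ())`) adjacent exactly to `x`, a new vertex `t`
(modelled as `Sum.inr (Sum.inr (Sum.inl ()))`) adjacent exactly to `y` and `z`,
and `c` new vertices (the set `Z`, modelled as `Sum.inr (Sum.inr (Sum.inr i))`)
each adjacent exactly to `s`. -/
def termAug {V : Type*} (G : SimpleGraph V) (x y z : V) (c : ℕ) :
    SimpleGraph (V ⊕ (Unit ⊕ Unit ⊕ Fin c)) :=
  SimpleGraph.fromRel (fun a b =>
    match a, b with
    | Sum.inl v, Sum.inl w => G.Adj v w
    | Sum.inl v, Sum.inr (Sum.inl _) => v = x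
    | Sum.inl v, Sum.inr (Sum.inr (Sum.inl _)) => v = y ∨ v = z
    | Sum.inr (Sum.inl _), Sum.inr (Sum.inr (Sum.inr _)) => True
    | _, _ => False)

/-- The terminal `s` of the terminal-augmented graph. -/
def sVert (V : Type*) (c : ℕ) : V ⊕ (Unit ⊕ Unit ⊕ Fin c) := Sum.inr (Sum.inl ())

/-- The terminal `t` of the terminal-augmented graph. -/
def tVert (V : Type*) (c : ℕ) : V ⊕ (Unit ⊕ Unit ⊕ Fin c) := Sum.inr (Sum.inr (Sum.inl ()))

/-- `G` has a Hamiltonian cycle. -/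
def HasHamiltonianCycle {V : Type*} [DecidableEq V] (G : SimpleGraph V) : Prop :=
  ∃ (v : V) (p : G.Walk v v), p.IsHamiltonianCycle

/-!
A Hamiltonian cycle through `x` leaves `x` along two distinct edges; as `x` has only three
neighbours, one of them goes to `w ∈ {y, z}`, and deleting that edge leaves a Hamiltonian
`x`–`w` path of `G`, which extends to the `st`-path `s, x, …, w, t` with `n + 2` vertices.
Conversely, the pendant vertices of `Z` cannot lie on an `st`-path, so an `st`-path with
`n + 2` vertices is `s`, followed by a Hamiltonian path of `G` from `x` to a neighbour
`w ∈ {y, z}` of `t`, followed by `t`; the edge `wx` closes it into a Hamiltonian cycle.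
-/

theorem Set.eq_or_eq_of_ncard_eq_three {α : Type*} {s : Set α} (hs : s.ncard = 3) {y z a b : α}
    (hy : y ∈ s) (hz : z ∈ s) (ha : a ∈ s) (hb : b ∈ s) (hyz : y ≠ z) (hab : a ≠ b) :
    (a = y ∨ a = z) ∨ (b = y ∨ b = z) := by
  by_contra! h
  have hsub : ({y, z, a, b} : Set α) ⊆ s := by simp [Set.insert_subset_iff, *]
  have := Set.ncard_le_ncard hsub (Set.finite_of_ncard_pos (by omega))
  rw [Set.ncard_insert_of_notMem (by grind), Set.ncard_insert_of_notMem (by grind),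
    Set.ncard_pair hab] at this
  omega

namespace SimpleGraph

variable {V W : Type*} {G : SimpleGraph V}

lemma Walk.IsPath.notMem_support_of_neighborSet_subset {a b u : V} {p : G.Walk a b}
    (hp : p.IsPath) (hub : u ≠ b) (hu : G.neighborSet u ⊆ {a}) : u ∉ p.support := by
  rw [Walk.mem_support_iff_exists_getVert]
  rintro ⟨i, rfl, hi⟩
  have hi : i < p.length := hi.lt_of_ne fun h => hub (h ▸ p.getVert_length)
  have hsucc : p.getVert (i + 1) = p.getVert 0 := by
    simpa using hu (p.adj_getVert_succ hi)
  exact absurd (hp.getVert_injOn (by simp; omega) (by simp) hsucc) (by omega)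

lemma Walk.exists_support_map_eq {H : SimpleGraph W} (f : G ↪g H) {u v : W} (q : H.Walk u v)
    (hq : ∀ m ∈ q.support, m ∈ Set.range f) {a b : V} (ha : f a = u) (hb : f b = v) :
    ∃ r : G.Walk a b, r.support.map f = q.support := by
  induction q generalizing a with
  | nil =>
    obtain rfl := f.injective (ha.trans hb.symm)
    exact ⟨.nil, by simp [ha]⟩
  | cons h q ih =>
    obtain ⟨a', rfl⟩ := hq _ (List.mem_cons_of_mem _ q.start_mem_support)
    obtain ⟨r, hr⟩ := ih (fun m hm => hq m (List.mem_cons_of_mem _ hm)) rfl hb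
    exact ⟨.cons (f.map_rel_iff.mp (ha ▸ h)) r, by simp [hr, ha]⟩

variable [DecidableEq V] [Fintype V]

lemma Walk.IsHamiltonianCycle.isHamiltonian_dropLast {u : V} {p : G.Walk u u}
    (hp : p.IsHamiltonianCycle) : p.dropLast.IsHamiltonian :=
  Walk.isHamiltonian_iff_isPath_and_length_eq.mpr
    ⟨hp.isCycle.isPath_dropLast, by rw [Walk.length_dropLast, hp.length_eq]⟩

lemma Walk.IsHamiltonianCycle.reverse {u : V} {p : G.Walk u u}
    (hp : p.IsHamiltonianCycle) : p.reverse.IsHamiltonianCycle :=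
  Walk.isHamiltonianCycle_iff_isCycle_and_length_eq.mpr
    ⟨hp.isCycle.reverse, by rw [Walk.length_reverse, hp.length_eq]⟩

lemma Walk.IsHamiltonian.isHamiltonianCycle_cons {u v : V} {p : G.Walk u v}
    (hp : p.IsHamiltonian) (h : G.Adj v u) (hcard : 3 ≤ Fintype.card V) :
    (Walk.cons h p).IsHamiltonianCycle :=
  Walk.isHamiltonianCycle_iff_isCycle_and_length_eq.mpr
    ⟨Walk.isCycle_iff_isPath_tail_and_le_length.mpr
      ⟨by simpa using hp.isPath, by simp [hp.length_eq]; omega⟩,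
     by simp [hp.length_eq]; omega⟩

end SimpleGraph

section TermAug

variable {V : Type*} {G : SimpleGraph V} {x y z : V} {c : ℕ}

lemma termAug_adj_inl_inl {v w : V} :
    (termAug G x y z c).Adj (Sum.inl v) (Sum.inl w) ↔ G.Adj v w := by
  simp only [termAug, fromRel_adj, ne_eq, Sum.inl.injEq]
  exact ⟨fun h => h.2.elim id (G.adj_symm ·), fun h => ⟨h.ne, .inl h⟩⟩

lemma termAug_adj_sVert {u : V ⊕ (Unit ⊕ Unit ⊕ Fin c)} :
    (termAug G x y z c).Adj (sVert V c) u ↔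
      u = Sum.inl x ∨ ∃ i, u = Sum.inr (Sum.inr (Sum.inr i)) := by
  rcases u with v | (⟨⟩ | ⟨⟩ | i) <;> simp [termAug, sVert, eq_comm]

lemma termAug_adj_tVert {u : V ⊕ (Unit ⊕ Unit ⊕ Fin c)} :
    (termAug G x y z c).Adj u (tVert V c) ↔ u = Sum.inl y ∨ u = Sum.inl z := by
  rcases u with v | (⟨⟩ | ⟨⟩ | i) <;> simp [termAug, tVert]

lemma termAug_neighborSet_zVert (i : Fin c) :
    (termAug G x y z c).neighborSet (Sum.inr (Sum.inr (Sum.inr i))) = {sVert V c} := by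
  ext u
  rcases u with v | (⟨⟩ | ⟨⟩ | j) <;> simp [termAug, sVert]

variable (G x y z c) in
def inlEmbedding : G ↪g termAug G x y z c where
  toFun := Sum.inl
  inj' := Sum.inl_injective
  map_rel_iff' := termAug_adj_inl_inl

@[simp]
lemma inlEmbedding_apply (v : V) : inlEmbedding G x y z c v = Sum.inl v := rfl

variable [Fintype V] [DecidableEq V]

lemma exists_isHamiltonian_walk_of_hasHamiltonianCycle (hx : (G.neighborSet x).ncard = 3)
    (hy : G.Adj x y) (hz : G.Adj x z) (hyz : y ≠ z) (h : HasHamiltonianCycle G) :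
    ∃ w, (w = y ∨ w = z) ∧ ∃ r : G.Walk x w, r.IsHamiltonian := by
  obtain ⟨v, p, hp⟩ := h
  set C := p.rotate x (hp.mem_support x)
  have hC : C.IsHamiltonianCycle := hp.rotate _
  rcases Set.eq_or_eq_of_ncard_eq_three hx hy hz (C.adj_penultimate hC.isCycle.not_nil).symm
    (C.adj_snd hC.isCycle.not_nil) hyz hC.isCycle.snd_ne_penultimate.symm with h | h
  · exact ⟨_, h, _, hC.isHamiltonian_dropLast⟩
  · exact ⟨_, Walk.penultimate_reverse C ▸ h, _, hC.reverse.isHamiltonian_dropLast⟩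

lemma exists_stPath_of_isHamiltonian {w : V} (hw : w = y ∨ w = z) {r : G.Walk x w}
    (hr : r.IsHamiltonian) :
    ∃ p : (termAug G x y z c).Walk (sVert V c) (tVert V c), p.IsPath ∧
      Fintype.card V + 2 ≤ p.support.length := by
  let f := inlEmbedding G x y z c
  have hs : (termAug G x y z c).Adj (sVert V c) (f.toHom x) := termAug_adj_sVert.mpr (.inl rfl)
  have ht : (termAug G x y z c).Adj (f.toHom w) (tVert V c) :=
    termAug_adj_tVert.mpr (by rcases hw with rfl | rfl <;> simp [f])
  refine ⟨.cons hs ((r.map f.toHom).concat ht),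
    ((hr.isPath.map (f := f.toHom) f.injective).concat ?_ ht).cons ?_, ?_⟩
  · rw [Walk.support_map]
    simp [f, tVert]
  · rw [Walk.support_concat, Walk.support_map]
    simp [f, sVert, tVert]
  · rw [Walk.length_support, Walk.length_cons, Walk.length_concat, Walk.length_map, hr.length_eq]
    omega

lemma exists_isHamiltonian_walk_of_stPath {p : (termAug G x y z c).Walk (sVert V c) (tVert V c)}
    (hp : p.IsPath) (hlen : Fintype.card V + 2 ≤ p.support.length) :
    ∃ w, (w = y ∨ w = z) ∧ ∃ r : G.Walk x w, r.IsHamiltonian := by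
  have hZ (i : Fin c) : Sum.inr (Sum.inr (Sum.inr i)) ∉ p.support :=
    hp.notMem_support_of_neighborSet_subset (by simp [tVert])
      (termAug_neighborSet_zVert i).subset
  have hp0 : ¬ p.Nil := Walk.not_nil_of_ne (by simp [sVert, tVert])
  have hsnd : p.snd = Sum.inl x := by
    rcases termAug_adj_sVert.mp (p.adj_snd hp0) with h | ⟨i, h⟩
    · exact h
    · exact absurd (h ▸ p.getVert_mem_support 1) (hZ i)
  have hp1 : ¬ p.tail.Nil := Walk.not_nil_of_ne (by rw [hsnd]; simp [tVert])
  obtain ⟨w, hw, hpen⟩ : ∃ w, (w = y ∨ w = z) ∧ p.tail.penultimate = Sum.inl w := by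
    rcases termAug_adj_tVert.mp (p.tail.adj_penultimate hp1) with h | h
    exacts [⟨y, .inl rfl, h⟩, ⟨z, .inr rfl, h⟩]
  set q := p.tail.dropLast
  have hsupp : p.support = sVert V c :: (q.support ++ [tVert V c]) := by
    rw [Walk.support_dropLast_concat hp1, Walk.cons_support_tail hp0]
  have hnd := hp.support_nodup
  rw [hsupp, List.nodup_cons, List.nodup_append] at hnd
  have hq (m) (hm : m ∈ q.support) : m ∈ Set.range (inlEmbedding G x y z c) := by
    rcases m with v | (⟨⟩ | ⟨⟩ | i)
    · exact ⟨v, rfl⟩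
    · exact absurd (List.mem_append_left _ hm) hnd.1
    · exact absurd rfl (hnd.2.2.2 _ hm _ (List.mem_singleton_self _))
    · exact absurd (hsupp ▸ List.mem_cons_of_mem _ (List.mem_append_left _ hm)) (hZ i)
  obtain ⟨r, hr⟩ := Walk.exists_support_map_eq _ q hq hsnd.symm hpen.symm
  have hrpath : r.IsPath := Walk.IsPath.mk' (List.Nodup.of_map _ (hr ▸ hnd.2.1))
  have hrlen : r.support.length = q.support.length := by rw [← hr, List.length_map]
  refine ⟨w, hw, r, Walk.isHamiltonian_iff_isPath_and_length_eq.mpr ⟨hrpath, ?_⟩⟩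
  have := hrpath.length_lt
  rw [hsupp] at hlen
  simp only [List.length_cons, List.length_append, List.length_nil] at hlen
  rw [Walk.length_support] at hrlen
  omega

end TermAug

theorem stmt_7_general {V : Type*} [Fintype V] [DecidableEq V] (G : SimpleGraph V)
    (x y z : V) (hx : (G.neighborSet x).ncard = 3)
    (hy : G.Adj x y) (hz : G.Adj x z) (hyz : y ≠ z) (c : ℕ) :
    HasHamiltonianCycle G ↔
      ∃ p : (termAug G x y z c).Walk (sVert V c) (tVert V c), p.IsPath ∧
        Fintype.card V + 2 ≤ p.support.length := by
  constructor
  · intro h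
    obtain ⟨w, hw, r, hr⟩ := exists_isHamiltonian_walk_of_hasHamiltonianCycle hx hy hz hyz h
    exact exists_stPath_of_isHamiltonian hw hr
  · rintro ⟨p, hp, hlen⟩
    obtain ⟨w, hw, r, hr⟩ := exists_isHamiltonian_walk_of_stPath hp hlen
    have hxw : G.Adj w x := by rcases hw with rfl | rfl <;> symm <;> assumption
    have hcard : 3 ≤ Fintype.card V := by
      simpa [hx, Nat.card_eq_fintype_card] using (G.neighborSet x).ncard_le_card
    exact ⟨w, _, hr.isHamiltonianCycle_cons hxw hcard⟩

/-- `G` has a Hamiltonian cycle iff the terminal-augmented graph `G'` contains an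
`st`-path `P` with `|V(P)| ≥ n + 2`. -/
theorem stmt_7 {V : Type*} [Fintype V] [DecidableEq V] (G : SimpleGraph V)
    (hG : G.Connected) (x y z : V) (hx : (G.neighborSet x).ncard = 3)
    (hy : G.Adj x y) (hz : G.Adj x z) (hyz : y ≠ z) (c : ℕ) :
    HasHamiltonianCycle G ↔
      ∃ p : (termAug G x y z c).Walk (sVert V c) (tVert V c), p.IsPath ∧
        Fintype.card V + 2 ≤ p.support.length :=
  stmt_7_general G x y z hx hy hz hyz c
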